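/- Fix reals a > 0, b > 0 and δ₂ > 0. Then the function δ₁ ↦ max(Φ(a, δ₂) − Φ(b, δ₁ − δ₂ + 1), 0) tends to 0 as δ₁ → ∞ (in fact it is eventually equal to 0). In the paper's notation, with a = αγN_b and b = αN_b, this says the asymptotic normalized instantaneous secrecy rate [Φ(αγN_b, δ₂) − Φ(αN_b, δ₁ − δ₂ + 1)]⁺ vanishes as the eavesdropper antenna ratio δ₁ → ∞ (Corollary 3). -/
import Mathlib


/-- The function `𝓕(x, y) = (√(x(1+√y)² + 1) − √(x(1−√y)² + 1))²`. -/
noncomputable def Fcal (x y : ℝ) : ℝ :=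
  (Real.sqrt (x * (1 + Real.sqrt y) ^ 2 + 1) - Real.sqrt (x * (1 - Real.sqrt y) ^ 2 + 1)) ^ 2

/-- The Verdú–Shamai asymptotic per-antenna MIMO capacity formula
`Φ(x, y) = y·log₂(1 + x − 𝓕(x,y)/4) + log₂(1 + x·y − 𝓕(x,y)/4) − (log₂ e)·𝓕(x,y)/(4x)`. -/
noncomputable def Phi (x y : ℝ) : ℝ :=
  y * Real.logb 2 (1 + x - Fcal x y / 4) + Real.logb 2 (1 + x * y - Fcal x y / 4)
    - Real.logb 2 (Real.exp 1) * Fcal x y / (4 * x)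

lemma Fcal_nonneg (x y : ℝ) : 0 ≤ Fcal x y := sq_nonneg _

lemma Fcal_le (x y : ℝ) (hx : 0 < x) (hy : 1 ≤ y) : Fcal x y ≤ 4 * x := by
  set s := Real.sqrt y with hs
  have hs1 : 1 ≤ s := by
    rw [hs, show (1:ℝ) = Real.sqrt 1 by simp]
    exact Real.sqrt_le_sqrt hy
  have hxnn := hx.le
  set B := Real.sqrt (x * (1 - s) ^ 2 + 1) with hB
  set A := Real.sqrt (x * (1 + s) ^ 2 + 1) with hA
  have hBnn : 0 ≤ B := Real.sqrt_nonneg _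
  have hsx : 0 ≤ Real.sqrt x := Real.sqrt_nonneg _
  have hsx2 : Real.sqrt x ^ 2 = x := Real.sq_sqrt hxnn
  have h1 : Real.sqrt x * (s - 1) ≤ B := by
    have heq : Real.sqrt x * (s - 1) = Real.sqrt (x * (1 - s) ^ 2) := by
      rw [Real.sqrt_mul hxnn, show (1 - s) ^ 2 = (s - 1) ^ 2 by ring,
        Real.sqrt_sq (by linarith)]
    rw [heq, hB]
    exact Real.sqrt_le_sqrt (by linarith)
  have hBA : B ≤ A := Real.sqrt_le_sqrt (by nlinarith [sq_nonneg s])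
  have key : A ≤ B + 2 * Real.sqrt x := by
    rw [hA]
    rw [Real.sqrt_le_iff]
    have hBsq : B ^ 2 = x * (1 - s) ^ 2 + 1 := Real.sq_sqrt (by positivity)
    constructor
    · linarith
    · nlinarith [mul_le_mul_of_nonneg_left h1 hsx]
  have : Fcal x y = (A - B) ^ 2 := rfl
  rw [this]
  nlinarith [hBA, key, hsx2]

lemma Phi_lower (x y : ℝ) (hx : 0 < x) (hy : 1 ≤ y) :
    Real.logb 2 (1 + x * y - x) - Real.logb 2 (Real.exp 1) ≤ Phi x y := by
  have hF0 := Fcal_nonneg x y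
  have hF := Fcal_le x y hx hy
  have he : (0:ℝ) < Real.logb 2 (Real.exp 1) := by
    apply Real.logb_pos one_lt_two
    have := Real.exp_one_gt_d9
    linarith
  have t1 : 0 ≤ y * Real.logb 2 (1 + x - Fcal x y / 4) := by
    apply mul_nonneg (by linarith)
    apply Real.logb_nonneg one_lt_two
    linarith
  have t2 : Real.logb 2 (1 + x * y - x) ≤ Real.logb 2 (1 + x * y - Fcal x y / 4) := by
    apply Real.logb_le_logb_of_le one_lt_two (by nlinarith)
    linarith
  have t3 : Real.logb 2 (Real.exp 1) * Fcal x y / (4 * x) ≤ Real.logb 2 (Real.exp 1) := by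
    rw [div_le_iff₀ (by linarith)]
    nlinarith
  unfold Phi
  linarith

/-- Corollary 3: the asymptotic normalized instantaneous secrecy rate
`[Φ(a, δ₂) − Φ(b, δ₁ − δ₂ + 1)]⁺` vanishes as the eavesdropper antenna ratio `δ₁ → ∞`;
in fact it is eventually equal to `0`. -/
theorem secrecy_rate_vanishes_atTop (a b δ₂ : ℝ) (ha : 0 < a) (hb : 0 < b) (hδ₂ : 0 < δ₂) :
    Filter.Tendsto (fun δ₁ : ℝ => max (Phi a δ₂ - Phi b (δ₁ - δ₂ + 1)) 0)
      Filter.atTop (nhds 0) ∧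
    ∀ᶠ δ₁ : ℝ in Filter.atTop, max (Phi a δ₂ - Phi b (δ₁ - δ₂ + 1)) 0 = 0 := by
  have hlin : Filter.Tendsto (fun δ₁ : ℝ => 1 + b * (δ₁ - δ₂ + 1) - b) Filter.atTop
      Filter.atTop := by
    have : (fun δ₁ : ℝ => 1 + b * (δ₁ - δ₂ + 1) - b) =
        fun δ₁ : ℝ => b * δ₁ + (1 + b * (1 - δ₂) - b) := by
      funext δ₁; ring
    rw [this]
    exact Filter.tendsto_atTop_add_const_right _ _
      (Filter.Tendsto.const_mul_atTop hb Filter.tendsto_id)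
  have hgrow : Filter.Tendsto (fun δ₁ : ℝ => Real.logb 2 (1 + b * (δ₁ - δ₂ + 1) - b))
      Filter.atTop Filter.atTop := (Real.tendsto_logb_atTop one_lt_two).comp hlin
  have hev : ∀ᶠ δ₁ : ℝ in Filter.atTop, max (Phi a δ₂ - Phi b (δ₁ - δ₂ + 1)) 0 = 0 := by
    filter_upwards [hgrow.eventually_ge_atTop (Phi a δ₂ + Real.logb 2 (Real.exp 1)),
      Filter.eventually_ge_atTop δ₂] with δ₁ h1 h2
    have hy : 1 ≤ δ₁ - δ₂ + 1 := by linarith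
    have := Phi_lower b (δ₁ - δ₂ + 1) hb hy
    apply max_eq_right
    linarith
  refine ⟨?_, hev⟩
  exact Filter.Tendsto.congr' (hev.mono fun x hx => hx.symm) tendsto_const_nhds
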